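/- In the Baumslag-Solitar group H = ⟨a, b | b⁻¹ a b = a²⟩, the intersection of the cyclic subgroup generated by a and the cyclic subgroup generated by b is trivial. -/

import Mathlib

/-- The single relator `b⁻¹ a b * a⁻²` of the Baumslag–Solitar group BS(1,2),
with generators `a = FreeGroup.of 0`, `b = FreeGroup.of 1`. -/
def bsRels : Set (FreeGroup (Fin 2)) :=
  {(FreeGroup.of 1)⁻¹ * FreeGroup.of 0 * FreeGroup.of 1 * (FreeGroup.of 0 ^ 2)⁻¹}

/-- The Baumslag–Solitar group `H = ⟨a, b ∣ b⁻¹ a b = a²⟩`. -/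
abbrev BS12 : Type := PresentedGroup bsRels

noncomputable def bsA : BS12 := PresentedGroup.of 0
noncomputable def bsB : BS12 := PresentedGroup.of 1

/-!
`H` acts on `ℚ` by `a : x ↦ x + 1` and `b : x ↦ x / 2`; the relation holds since
conjugating the translation by `1` with the halving map gives the translation by `2`.
Every power of `b` fixes `0`, while `aᵐ` moves `0` to `m`, so a power of `a` that is also a
power of `b` must be `a⁰ = 1`.
-/

noncomputable def bsGenPerm : Fin 2 → Equiv.Perm ℚ :=
  ![Equiv.addRight 1, Equiv.mulRight₀ 2⁻¹ (by norm_num)]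

lemma bsGenPerm_rel : ∀ r ∈ bsRels, FreeGroup.lift bsGenPerm r = 1 := by
  rintro r rfl
  simp only [map_mul, map_inv, map_pow, FreeGroup.lift_apply_of, mul_inv_eq_one]
  ext x
  simp [bsGenPerm, Equiv.Perm.mul_apply, Equiv.Perm.inv_def, Equiv.mulRight₀_symm_apply]
  ring

noncomputable def bsToPerm : BS12 →* Equiv.Perm ℚ :=
  PresentedGroup.toGroup bsGenPerm_rel

lemma bsToPerm_zpow_bsA_apply (m : ℤ) (x : ℚ) : bsToPerm (bsA ^ m) x = x + m := by
  simp [bsToPerm, bsA, PresentedGroup.toGroup.of, bsGenPerm, Equiv.zsmul_addRight]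

lemma bsB_mem_comap_stabilizer_zero :
    bsB ∈ (MulAction.stabilizer (Equiv.Perm ℚ) (0 : ℚ)).comap bsToPerm := by
  simp [MulAction.mem_stabilizer_iff, Equiv.Perm.smul_def, bsToPerm, bsB,
    PresentedGroup.toGroup.of, bsGenPerm]

theorem stmt_5 : Subgroup.zpowers bsA ⊓ Subgroup.zpowers bsB = ⊥ := by
  refine eq_bot_iff.2 fun x ⟨⟨m, hm⟩, hxB⟩ => ?_
  have hfix : bsToPerm x 0 = 0 :=
    Subgroup.zpowers_le.2 bsB_mem_comap_stabilizer_zero hxB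
  rw [← hm, bsToPerm_zpow_bsA_apply, zero_add, Int.cast_eq_zero] at hfix
  simp [← hm, hfix]
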